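/- Let α > 0 and define f(u) := u^{2/α}·e^{−u}/Γ(1 + 2/α) for u ≥ 0. Then for every r ≥ 0, f(r) = (2/α)·e^{−r} · ∫_0^r e^{y}·y^{(2−α)/α} · ( ∫_y^∞ u^{−2/α}·f(u) du ) dy; that is, the Gamma density f solves the integral fixed-point equation for the interval-splitting model with uniform splitting distribution. -/

import Mathlib

/-! The weight `u^{-2/α}` cancels the power in `f`, so the inner integral is `e^{-y}/Γ(1 + 2/α)`;
the outer integrand then collapses to `y^{2/α - 1}/Γ(1 + 2/α)`, whose integral over `[0, r]`
is `r^{2/α}/((2/α) Γ(1 + 2/α))`, i.e. `f(r) e^{r}/(2/α)`. -/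

/-- The Gamma density with shape `1 + 2/α` and rate `1`:
`f(u) = u^{2/α} e^{−u} / Γ(1 + 2/α)`. -/
noncomputable def gammaDensity (α u : ℝ) : ℝ :=
  u ^ (2 / α) * Real.exp (-u) / Real.Gamma (1 + 2 / α)

open Real Set MeasureTheory

lemma rpow_neg_mul_gammaDensity (α : ℝ) {u : ℝ} (hu : 0 < u) :
    u ^ (-(2 / α)) * gammaDensity α u = exp (-u) / Gamma (1 + 2 / α) := by
  rw [gammaDensity, mul_div_assoc', ← mul_assoc, ← rpow_add hu, neg_add_cancel, rpow_zero, one_mul]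

lemma setIntegral_Ioi_rpow_neg_mul_gammaDensity (α : ℝ) {y : ℝ} (hy : 0 ≤ y) :
    ∫ u in Ioi y, u ^ (-(2 / α)) * gammaDensity α u = exp (-y) / Gamma (1 + 2 / α) := by
  rw [setIntegral_congr_fun measurableSet_Ioi
      fun u hu => rpow_neg_mul_gammaDensity α (hy.trans_lt hu),
    integral_div, integral_exp_neg_Ioi]

lemma integral_rpow_sub_one_eq_div {s : ℝ} (hs : 0 < s) (r : ℝ) :
    ∫ y in (0 : ℝ)..r, y ^ (s - 1) = r ^ s / s := by
  rw [integral_rpow (Or.inl (by linarith)), sub_add_cancel, zero_rpow hs.ne', sub_zero]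

/-- For `α > 0` and every `r ≥ 0`, the Gamma density `f = gammaDensity α` satisfies
`f(r) = (2/α) e^{−r} ∫_0^r e^y y^{(2−α)/α} (∫_y^∞ u^{−2/α} f(u) du) dy`;
that is, `f` solves the fixed-point equation for uniform splitting. -/
theorem gammaDensity_fixed_point (α : ℝ) (hα : 0 < α) :
    ∀ r : ℝ, 0 ≤ r →
      gammaDensity α r
        = (2 / α) * Real.exp (-r) *
            ∫ y in (0:ℝ)..r, Real.exp y * y ^ ((2 - α) / α) *
              (∫ u in Set.Ioi y, u ^ (-(2 / α)) * gammaDensity α u) := by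
  intro r hr
  have hs : 0 < 2 / α := by positivity
  have hexponent : (2 - α) / α = 2 / α - 1 := by field_simp
  have hintegrand : ∀ y ∈ uIcc 0 r,
      exp y * y ^ ((2 - α) / α) * ∫ u in Ioi y, u ^ (-(2 / α)) * gammaDensity α u
        = y ^ (2 / α - 1) / Gamma (1 + 2 / α) := by
    intro y hy
    rw [setIntegral_Ioi_rpow_neg_mul_gammaDensity α (uIcc_of_le hr ▸ hy).1, hexponent, exp_neg]
    field_simp
  rw [intervalIntegral.integral_congr hintegrand, intervalIntegral.integral_div,
    integral_rpow_sub_one_eq_div hs, gammaDensity]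
  field_simp
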